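/- arXiv:2404.06105 — 2 statements merged into one kernel-verified Lean document; each statement's English description precedes it below -/
import Mathlib

section
/- Let R be a finite set of red points and B a finite set of blue points in the plane (ℝ²) with |R| = |B| = n and R ∪ B in general position. Then there exists an alternating path on R ∪ B (a sequence of distinct points of R ∪ B with consecutive points of different colors whose connecting straight-line segments are pairwise non-crossing) that visits at least n of the 2n points. -/
noncomputable section

/-- The plane. -/
abbrev Pt : Type := EuclideanSpace ℝ (Fin 2)

/-- A finite point set is in general position if no three of its points are collinear. -/
def GenPos (P : Set Pt) : Prop :=
  ∀ x ∈ P, ∀ y ∈ P, ∀ z ∈ P, x ≠ y → x ≠ z → y ≠ z → ¬ Collinear ℝ ({x, y, z} : Set Pt)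

/-- Consecutive points of the sequence `q 0, …, q (m-1)` have different colors
(one is red, i.e. in `R`, the other blue, i.e. in `B`). -/
def Alternating (R B : Set Pt) (m : ℕ) (q : ℕ → Pt) : Prop :=
  ∀ i, i + 1 < m → ((q i ∈ R ∧ q (i + 1) ∈ B) ∨ (q i ∈ B ∧ q (i + 1) ∈ R))

/-- The straight-line segments joining consecutive points of `q 0, …, q (m-1)` are pairwise
non-crossing: consecutive segments meet exactly in their shared vertex, and
non-consecutive segments are disjoint. -/
def NonCrossing (m : ℕ) (q : ℕ → Pt) : Prop :=
  ∀ i j, i + 1 < m → j + 1 < m → i < j →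
    (j = i + 1 →
      segment ℝ (q i) (q (i + 1)) ∩ segment ℝ (q j) (q (j + 1)) = {q j}) ∧
    (j ≠ i + 1 →
      segment ℝ (q i) (q (i + 1)) ∩ segment ℝ (q j) (q (j + 1)) = (∅ : Set Pt))

/-- An alternating Hamiltonian path on `R ∪ B`: an ordering `q 0, …, q (m-1)` of all points of
`R ∪ B` (each visited exactly once) in which consecutive points have different colors and the
connecting straight-line segments are pairwise non-crossing. -/
def AltHamPath (R B : Set Pt) (m : ℕ) (q : ℕ → Pt) : Prop :=
  Set.InjOn q (Set.Iio m) ∧ q '' Set.Iio m = R ∪ B ∧ Alternating R B m q ∧ NonCrossing m q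

namespace AltPath

/-- Cross product test: `cr a b w > 0` iff `w` is to the left of the directed line `a → b`. -/
def cr (a b w : ℝ × ℝ) : ℝ :=
  (b.1 - a.1) * (w.2 - a.2) - (b.2 - a.2) * (w.1 - a.1)

/-- Height at which the line through `a` and `c` crosses the vertical line `x = t`. -/
def Yc (t : ℝ) (a c : ℝ × ℝ) : ℝ :=
  (a.2 * (c.1 - t) + c.2 * (t - a.1)) / (c.1 - a.1)

lemma cr_self_left (a b : ℝ × ℝ) : cr a b a = 0 := by simp [cr]

lemma cr_self_right (a b : ℝ × ℝ) : cr a b b = 0 := by simp [cr]; ring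

lemma cr_combo (p q u v : ℝ × ℝ) {α β : ℝ} (h : α + β = 1) :
    cr p q (α • u + β • v) = α * cr p q u + β * cr p q v := by
  have hβ : β = 1 - α := by linarith
  subst hβ
  simp only [cr, Prod.smul_fst, Prod.smul_snd, Prod.fst_add, Prod.snd_add, smul_eq_mul]
  ring

lemma mem_segment_cr_nonpos {p q u v x : ℝ × ℝ} (hu : cr p q u ≤ 0) (hv : cr p q v ≤ 0)
    (hx : x ∈ segment ℝ u v) : cr p q x ≤ 0 := by
  obtain ⟨α, β, hα, hβ, hαβ, rfl⟩ := hx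
  rw [cr_combo p q u v hαβ]
  have := mul_nonneg hα (neg_nonneg.mpr hu)
  have := mul_nonneg hβ (neg_nonneg.mpr hv)
  nlinarith

lemma mem_segment_cr_neg {p q u v x : ℝ × ℝ} (hu : cr p q u < 0) (hv : cr p q v < 0)
    (hx : x ∈ segment ℝ u v) : cr p q x < 0 := by
  obtain ⟨α, β, hα, hβ, hαβ, rfl⟩ := hx
  rw [cr_combo p q u v hαβ]
  rcases eq_or_lt_of_le hα with h0 | h0
  · have hβ1 : β = 1 := by linarith
    rw [← h0, hβ1]; simpa using hv
  · nlinarith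


/-- Disjointness of segments, case A: the first segment lies on a line,
the second strictly on one side. -/
lemma disjA {p q x y u v : ℝ × ℝ} (hx : cr p q x = 0) (hy : cr p q y = 0)
    (hu : cr p q u < 0) (hv : cr p q v < 0) :
    segment ℝ x y ∩ segment ℝ u v = (∅ : Set (ℝ × ℝ)) := by
  ext z
  simp only [Set.mem_inter_iff, Set.mem_empty_iff_false, iff_false, not_and]
  intro hz1 hz2
  have h1 : cr p q z = 0 := by
    obtain ⟨α, β, hα, hβ, hαβ, rfl⟩ := hz1
    rw [cr_combo p q x y hαβ, hx, hy]; ring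
  have h2 : cr p q z < 0 := mem_segment_cr_neg hu hv hz2
  linarith

/-- Disjointness of segments, case B: first segment from strictly-positive side to a
point `y` on the line, second segment weakly on the negative side touching the
line only possibly at `w ≠ y`. -/
lemma disjB {p q x y u v w : ℝ × ℝ} (hx : 0 < cr p q x) (hy : cr p q y = 0)
    (hu : cr p q u ≤ 0) (hv : cr p q v ≤ 0)
    (hu0 : cr p q u = 0 → u = w) (hv0 : cr p q v = 0 → v = w)
    (hwy : w ≠ y) (huv : u ≠ v) :
    segment ℝ x y ∩ segment ℝ u v = (∅ : Set (ℝ × ℝ)) := by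
  ext z
  simp only [Set.mem_inter_iff, Set.mem_empty_iff_false, iff_false, not_and]
  intro hz1 hz2
  -- cr z ≥ 0 from first segment, ≤ 0 from second, so = 0
  obtain ⟨α, β, hα, hβ, hαβ, hzeq⟩ := hz1
  have hcz : cr p q z = α * cr p q x := by
    rw [← hzeq, cr_combo p q x y hαβ, hy]; ring
  have hle : cr p q z ≤ 0 := mem_segment_cr_nonpos hu hv hz2
  have hα0 : α = 0 := by nlinarith
  have hzy : z = y := by
    rw [← hzeq, hα0]
    have hβ1 : β = 1 := by linarith
    rw [hβ1]; simp
  have hz0 : cr p q z = 0 := by rw [hcz, hα0]; ring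
  obtain ⟨γ, δ, hγ, hδ, hγδ, hyeq⟩ := hz2
  have h0 : γ * cr p q u + δ * cr p q v = 0 := by
    rw [← cr_combo p q u v hγδ, hyeq, hz0]
  have hterm : γ * cr p q u = 0 ∧ δ * cr p q v = 0 := by
    constructor <;> nlinarith [mul_nonpos_of_nonneg_of_nonpos hγ hu,
      mul_nonpos_of_nonneg_of_nonpos hδ hv]
  rcases eq_or_lt_of_le hγ with hγ0 | hγpos
  · have hδ1 : δ = 1 := by linarith
    have hzv : z = v := by rw [← hyeq, ← hγ0, hδ1]; simp
    have hv00 : cr p q v = 0 := by rw [← hzv]; exact hz0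
    exact hwy ((hv0 hv00).symm.trans (hzv.symm.trans hzy))
  · have hu00 : cr p q u = 0 := by
      rcases mul_eq_zero.mp hterm.1 with h | h
      · exact absurd h (by positivity)
      · exact h
    have huw : u = w := hu0 hu00
    rcases eq_or_lt_of_le hδ with hδ0 | hδpos
    · have hγ1 : γ = 1 := by linarith
      have hzu : z = u := by rw [← hyeq, hγ1, ← hδ0]; simp
      exact hwy (huw.symm.trans (hzu.symm.trans hzy))
    · have hv00 : cr p q v = 0 := by
        rcases mul_eq_zero.mp hterm.2 with h | h
        · exact absurd h (by positivity)
        · exact h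
      exact huv (huw.trans (hv0 hv00).symm)

/-- Two consecutive segments of a path meet exactly at the shared vertex,
provided the three points are not collinear. -/
lemma seg_consec {x y z : ℝ × ℝ} (h : cr x y z ≠ 0) :
    segment ℝ x y ∩ segment ℝ y z = {y} := by
  apply Set.eq_singleton_iff_unique_mem.mpr
  constructor
  · exact ⟨right_mem_segment ℝ x y, left_mem_segment ℝ y z⟩
  · rintro w ⟨hw1, hw2⟩
    obtain ⟨γ, δ, hγ, hδ, hγδ, hweq⟩ := hw2
    have hcw : cr x y w = 0 := by
      obtain ⟨α, β, hα, hβ, hαβ, rfl⟩ := hw1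
      rw [cr_combo x y x y hαβ, cr_self_left, cr_self_right]; ring
    have : δ * cr x y z = 0 := by
      rw [← hweq, cr_combo x y y z hγδ, cr_self_right] at hcw
      linarith
    have hδ0 : δ = 0 := by
      rcases mul_eq_zero.mp this with h' | h'
      · exact h'
      · exact absurd h' h
    have hγ1 : γ = 1 := by linarith
    rw [← hweq, hδ0, hγ1]; simp

lemma Ydiff_left {t : ℝ} {a c w : ℝ × ℝ} (ha : a.1 < t) (hw : w.1 < t) (hc : t < c.1) :
    Yc t w c - Yc t a c = cr a c w * (c.1 - t) / ((c.1 - w.1) * (c.1 - a.1)) := by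
  have h1 : c.1 - w.1 ≠ 0 := by linarith
  have h2 : c.1 - a.1 ≠ 0 := by linarith
  unfold Yc cr
  field_simp
  ring

lemma Ydiff_right {t : ℝ} {a c w : ℝ × ℝ} (ha : a.1 < t) (hw : t < w.1) (hc : t < c.1) :
    Yc t a w - Yc t a c = cr a c w * (t - a.1) / ((w.1 - a.1) * (c.1 - a.1)) := by
  have h1 : w.1 - a.1 ≠ 0 := by linarith
  have h2 : c.1 - a.1 ≠ 0 := by linarith
  unfold Yc cr
  field_simp
  ring

lemma crY {t : ℝ} {a c : ℝ × ℝ} (h : a.1 < c.1) (y : ℝ) :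
    cr a c (t, y) = (c.1 - a.1) * (y - Yc t a c) := by
  have h2 : c.1 - a.1 ≠ 0 := by linarith
  unfold Yc cr
  field_simp
  ring

lemma crYcombo {t : ℝ} {a c a' c' : ℝ × ℝ} (h : a'.1 < c'.1) :
    cr a c (t, Yc t a' c') =
      ((c'.1 - t) * cr a c a' + (t - a'.1) * cr a c c') / (c'.1 - a'.1) := by
  have h2 : c'.1 - a'.1 ≠ 0 := by linarith
  unfold Yc cr
  field_simp
  ring

/-- Two bichromatic pairs which both support all remaining points from above are equal. -/
lemma twoBridges {t : ℝ} {a c a' c' : ℝ × ℝ}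
    (ha : a.1 < t) (ha' : a'.1 < t) (hc : t < c.1) (hc' : t < c'.1)
    (h1 : a' = a ∨ cr a c a' < 0) (h2 : c' = c ∨ cr a c c' < 0)
    (h3 : a = a' ∨ cr a' c' a < 0) (h4 : c = c' ∨ cr a' c' c < 0)
    (hne : a ≠ a' ∨ c ≠ c') : False := by
  have hac : a.1 < c.1 := lt_trans ha hc
  have hac' : a'.1 < c'.1 := lt_trans ha' hc'
  -- Y' < Y :
  have key : ∀ (b d b' d' : ℝ × ℝ), b.1 < t → b'.1 < t → t < d.1 → t < d'.1 →
      (b' = b ∨ cr b d b' < 0) → (d' = d ∨ cr b d d' < 0) → (b ≠ b' ∨ d ≠ d') →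
      Yc t b' d' < Yc t b d := by
    intro b d b' d' hb hb' hd hd' g1 g2 gne
    have hbd : b.1 < d.1 := lt_trans hb hd
    have hbd' : b'.1 < d'.1 := lt_trans hb' hd'
    have e1 : cr b d (t, Yc t b' d') = (d.1 - b.1) * (Yc t b' d' - Yc t b d) := crY hbd _
    have e2 : cr b d (t, Yc t b' d') =
        ((d'.1 - t) * cr b d b' + (t - b'.1) * cr b d d') / (d'.1 - b'.1) := crYcombo hbd'
    have hX1 : cr b d b' ≤ 0 := by
      rcases g1 with h | h
      · rw [h, cr_self_left]
      · linarith
    have hX2 : cr b d d' ≤ 0 := by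
      rcases g2 with h | h
      · rw [h, cr_self_right]
      · linarith
    have hstrict : cr b d b' < 0 ∨ cr b d d' < 0 := by
      rcases gne with h | h
      · rcases g1 with h' | h'
        · exact absurd h'.symm h
        · exact Or.inl h'
      · rcases g2 with h' | h'
        · exact absurd h'.symm h
        · exact Or.inr h'
    have hnum : (d'.1 - t) * cr b d b' + (t - b'.1) * cr b d d' < 0 := by
      rcases hstrict with h | h
      · nlinarith
      · nlinarith
    have hlt : cr b d (t, Yc t b' d') < 0 := by
      rw [e2]
      exact div_neg_of_neg_of_pos hnum (by linarith)
    nlinarith [hlt, e1]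
  have hYY' : Yc t a' c' < Yc t a c := key a c a' c' ha ha' hc hc' h1 h2 hne
  have hY'Y : Yc t a c < Yc t a' c' := key a' c' a c ha' ha hc' hc h3 h4
    (hne.imp Ne.symm Ne.symm)
  linarith

/-- Existence of the top bridge: a bichromatic pair whose line has all other
points strictly below (on its negative side). -/
lemma bridge_exists {t : ℝ} {A C : Finset (ℝ × ℝ)}
    (hA : ∀ a ∈ A, a.1 < t) (hC : ∀ c ∈ C, t < c.1)
    (hgp : ∀ x ∈ A ∪ C, ∀ y ∈ A ∪ C, ∀ z ∈ A ∪ C,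
      x ≠ y → x ≠ z → y ≠ z → cr x y z ≠ 0)
    (hA0 : A.Nonempty) (hC0 : C.Nonempty) :
    ∃ a ∈ A, ∃ c ∈ C, ∀ w ∈ A ∪ C, w ≠ a → w ≠ c → cr a c w < 0 := by
  obtain ⟨p, hp, hmax⟩ := (A ×ˢ C).exists_max_image (fun z => Yc t z.1 z.2) (hA0.product hC0)
  obtain ⟨hpA, hpC⟩ := Finset.mem_product.mp hp
  refine ⟨p.1, hpA, p.2, hpC, ?_⟩
  intro w hw hwa hwc
  have ha := hA p.1 hpA
  have hc := hC p.2 hpC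
  have hpane : p.1 ≠ p.2 := by
    intro h
    have h1 := hA p.1 hpA
    have h2 := hC p.2 hpC
    rw [h] at h1
    linarith
  have hne : cr p.1 p.2 w ≠ 0 :=
    hgp p.1 (Finset.mem_union_left _ hpA) p.2 (Finset.mem_union_right _ hpC) w hw
      hpane (Ne.symm hwa) (Ne.symm hwc)
  rcases lt_or_gt_of_ne hne with h | h
  · exact h
  · exfalso
    rcases Finset.mem_union.mp hw with hwA | hwC
    · have hw1 := hA w hwA
      have hdiff : Yc t w p.2 - Yc t p.1 p.2 =
          cr p.1 p.2 w * (p.2.1 - t) / ((p.2.1 - w.1) * (p.2.1 - p.1.1)) := Ydiff_left ha hw1 hc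
      have hpos : 0 < cr p.1 p.2 w * (p.2.1 - t) / ((p.2.1 - w.1) * (p.2.1 - p.1.1)) := by
        apply div_pos (by nlinarith) (by nlinarith)
      have := hmax (w, p.2) (Finset.mem_product.mpr ⟨hwA, hpC⟩)
      simp only at this
      nlinarith
    · have hw1 := hC w hwC
      have hdiff : Yc t p.1 w - Yc t p.1 p.2 =
          cr p.1 p.2 w * (t - p.1.1) / ((w.1 - p.1.1) * (p.2.1 - p.1.1)) := Ydiff_right ha hw1 hc
      have hpos : 0 < cr p.1 p.2 w * (t - p.1.1) / ((w.1 - p.1.1) * (p.2.1 - p.1.1)) := by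
        apply div_pos (by nlinarith) (by nlinarith)
      have := hmax (p.1, w) (Finset.mem_product.mpr ⟨hpA, hwC⟩)
      simp only at this
      nlinarith

lemma getD_mem {L : List (ℝ × ℝ)} {i : ℕ} (h : i < L.length) : L.getD i 0 ∈ L := by
  rw [List.getD_eq_getElem _ _ h]
  exact List.getElem_mem h

lemma getD_ne {L : List (ℝ × ℝ)} (h : L.Nodup) {i j : ℕ} (hi : i < L.length)
    (hj : j < L.length) (hij : i ≠ j) : L.getD i 0 ≠ L.getD j 0 := by
  rw [List.getD_eq_getElem _ _ hi, List.getD_eq_getElem _ _ hj]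
  intro he
  exact hij (List.Nodup.getElem_inj_iff h |>.mp he)

section Step

variable {t : ℝ} {A C : Finset (ℝ × ℝ)}

/-- Disjointness of the first edge from a later edge, when the start vertex was on
the left side. -/
lemma step_disj_left
    (hA : ∀ a ∈ A, a.1 < t) (hC : ∀ c ∈ C, t < c.1)
    (hgp : ∀ x ∈ A ∪ C, ∀ y ∈ A ∪ C, ∀ z ∈ A ∪ C,
      x ≠ y → x ≠ z → y ≠ z → cr x y z ≠ 0)
    {a₀ c₀ a₁ c₁ u v : ℝ × ℝ}
    (ha₀ : a₀ ∈ A) (hc₀ : c₀ ∈ C)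
    (hbr₀ : ∀ w ∈ A ∪ C, w ≠ a₀ → w ≠ c₀ → cr a₀ c₀ w < 0)
    (ha₁ : a₁ ∈ A.erase a₀) (hc₁ : c₁ ∈ C)
    (hbr₁ : ∀ w ∈ (A.erase a₀) ∪ C, w ≠ a₁ → w ≠ c₁ → cr a₁ c₁ w < 0)
    (hu : u ∈ (A.erase a₀) ∪ C) (hv : v ∈ (A.erase a₀) ∪ C)
    (huc₁ : u ≠ c₁) (hvc₁ : v ≠ c₁) (huv : u ≠ v) :
    segment ℝ a₀ c₁ ∩ segment ℝ u v = (∅ : Set (ℝ × ℝ)) := by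
  have hsub : (A.erase a₀) ∪ C ⊆ A ∪ C :=
    Finset.union_subset_union (Finset.erase_subset _ _) le_rfl
  have ha₀t : a₀.1 < t := hA a₀ ha₀
  have hc₀t : t < c₀.1 := hC c₀ hc₀
  have ha₁A : a₁ ∈ A := Finset.mem_of_mem_erase ha₁
  have ha₁t : a₁.1 < t := hA a₁ ha₁A
  have hc₁t : t < c₁.1 := hC c₁ hc₁
  have ha₀n : a₀ ∉ (A.erase a₀) ∪ C := by
    intro h
    rcases Finset.mem_union.mp h with h | h
    · exact (Finset.notMem_erase a₀ A) h
    · exact absurd (hC a₀ h) (by linarith)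
  have hua₀ : u ≠ a₀ := fun h => ha₀n (h ▸ hu)
  have hva₀ : v ≠ a₀ := fun h => ha₀n (h ▸ hv)
  have ha₁a₀ : a₁ ≠ a₀ := Finset.ne_of_mem_erase ha₁
  have ha₁c₁ : a₁ ≠ c₁ := by intro h; rw [h] at ha₁t; linarith
  by_cases hcc : c₁ = c₀
  · refine disjA (p := a₀) (q := c₀) (cr_self_left a₀ c₀) ?_ ?_ ?_
    · rw [hcc]; exact cr_self_right a₀ c₀
    · exact hbr₀ u (hsub hu) hua₀ (hcc ▸ huc₁)
    · exact hbr₀ v (hsub hv) hva₀ (hcc ▸ hvc₁)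
  · have ha₁c₀ : a₁ ≠ c₀ := by
      intro h; rw [h] at ha₁t; linarith
    have hc₁a₀ : c₁ ≠ a₀ := by
      intro h; rw [h] at hc₁t; linarith
    have hc₀mem : c₀ ∈ (A.erase a₀) ∪ C := Finset.mem_union_right _ hc₀
    have hc₀a₁ : c₀ ≠ a₁ := Ne.symm ha₁c₀
    have hpos : 0 < cr a₁ c₁ a₀ := by
      have hne0 : cr a₁ c₁ a₀ ≠ 0 :=
        hgp a₁ (Finset.mem_union_left _ ha₁A) c₁ (Finset.mem_union_right _ hc₁)
          a₀ (Finset.mem_union_left _ ha₀) ha₁c₁ ha₁a₀ hc₁a₀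
      rcases lt_or_gt_of_ne hne0 with hneg | hpos
      · exfalso
        exact twoBridges ha₀t ha₁t hc₀t hc₁t
          (Or.inr (hbr₀ a₁ (Finset.mem_union_left _ ha₁A) ha₁a₀ ha₁c₀))
          (Or.inr (hbr₀ c₁ (Finset.mem_union_right _ hc₁) hc₁a₀ hcc))
          (Or.inr hneg)
          (Or.inr (hbr₁ c₀ hc₀mem hc₀a₁ (Ne.symm hcc)))
          (Or.inr (Ne.symm hcc))
      · exact hpos
    refine disjB (p := a₁) (q := c₁) (w := a₁) hpos (cr_self_right a₁ c₁) ?_ ?_ ?_ ?_ ha₁c₁ huv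
    · by_cases h : u = a₁
      · rw [h, cr_self_left]
      · exact le_of_lt (hbr₁ u hu h huc₁)
    · by_cases h : v = a₁
      · rw [h, cr_self_left]
      · exact le_of_lt (hbr₁ v hv h hvc₁)
    · intro h0
      by_contra h
      exact absurd h0 (ne_of_lt (hbr₁ u hu h huc₁))
    · intro h0
      by_contra h
      exact absurd h0 (ne_of_lt (hbr₁ v hv h hvc₁))

/-- Disjointness of the first edge from a later edge, when the start vertex was on
the right side. -/
lemma step_disj_right
    (hA : ∀ a ∈ A, a.1 < t) (hC : ∀ c ∈ C, t < c.1)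
    (hgp : ∀ x ∈ A ∪ C, ∀ y ∈ A ∪ C, ∀ z ∈ A ∪ C,
      x ≠ y → x ≠ z → y ≠ z → cr x y z ≠ 0)
    {a₀ c₀ a₁ c₁ u v : ℝ × ℝ}
    (ha₀ : a₀ ∈ A) (hc₀ : c₀ ∈ C)
    (hbr₀ : ∀ w ∈ A ∪ C, w ≠ a₀ → w ≠ c₀ → cr a₀ c₀ w < 0)
    (ha₁ : a₁ ∈ A) (hc₁ : c₁ ∈ C.erase c₀)
    (hbr₁ : ∀ w ∈ A ∪ (C.erase c₀), w ≠ a₁ → w ≠ c₁ → cr a₁ c₁ w < 0)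
    (hu : u ∈ A ∪ (C.erase c₀)) (hv : v ∈ A ∪ (C.erase c₀))
    (hua₁ : u ≠ a₁) (hva₁ : v ≠ a₁) (huv : u ≠ v) :
    segment ℝ c₀ a₁ ∩ segment ℝ u v = (∅ : Set (ℝ × ℝ)) := by
  have hsub : A ∪ (C.erase c₀) ⊆ A ∪ C :=
    Finset.union_subset_union le_rfl (Finset.erase_subset _ _)
  have ha₀t : a₀.1 < t := hA a₀ ha₀
  have hc₀t : t < c₀.1 := hC c₀ hc₀
  have hc₁C : c₁ ∈ C := Finset.mem_of_mem_erase hc₁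
  have hc₁t : t < c₁.1 := hC c₁ hc₁C
  have ha₁t : a₁.1 < t := hA a₁ ha₁
  have hc₀n : c₀ ∉ A ∪ (C.erase c₀) := by
    intro h
    rcases Finset.mem_union.mp h with h | h
    · exact absurd (hA c₀ h) (by linarith)
    · exact (Finset.notMem_erase c₀ C) h
  have huc₀ : u ≠ c₀ := fun h => hc₀n (h ▸ hu)
  have hvc₀ : v ≠ c₀ := fun h => hc₀n (h ▸ hv)
  have hc₁c₀ : c₁ ≠ c₀ := Finset.ne_of_mem_erase hc₁
  have ha₁c₁ : a₁ ≠ c₁ := by intro h; rw [h] at ha₁t; linarith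
  by_cases haa : a₁ = a₀
  · refine disjA (p := a₀) (q := c₀) (cr_self_right a₀ c₀) ?_ ?_ ?_
    · rw [haa]
      exact cr_self_left a₀ c₀
    · exact hbr₀ u (hsub hu) (haa ▸ hua₁) huc₀
    · exact hbr₀ v (hsub hv) (haa ▸ hva₁) hvc₀
  · have ha₁c₀ : a₁ ≠ c₀ := by
      intro h; rw [h] at ha₁t; linarith
    have hc₁a₀ : c₁ ≠ a₀ := by
      intro h; rw [h] at hc₁t; linarith
    have ha₀mem : a₀ ∈ A ∪ (C.erase c₀) := Finset.mem_union_left _ ha₀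
    have hpos : 0 < cr a₁ c₁ c₀ := by
      have hne0 : cr a₁ c₁ c₀ ≠ 0 :=
        hgp a₁ (Finset.mem_union_left _ ha₁) c₁ (Finset.mem_union_right _ hc₁C)
          c₀ (Finset.mem_union_right _ hc₀) ha₁c₁ ha₁c₀ hc₁c₀
      rcases lt_or_gt_of_ne hne0 with hneg | hpos
      · exfalso
        exact twoBridges ha₀t ha₁t hc₀t hc₁t
          (Or.inr (hbr₀ a₁ (Finset.mem_union_left _ ha₁) haa ha₁c₀))
          (Or.inr (hbr₀ c₁ (Finset.mem_union_right _ hc₁C) hc₁a₀ hc₁c₀))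
          (Or.inr (hbr₁ a₀ ha₀mem (Ne.symm haa) (Ne.symm hc₁a₀)))
          (Or.inr hneg)
          (Or.inl (Ne.symm haa))
      · exact hpos
    refine disjB (p := a₁) (q := c₁) (w := c₁) hpos (cr_self_left a₁ c₁) ?_ ?_ ?_ ?_
      (Ne.symm ha₁c₁) huv
    · by_cases h : u = c₁
      · rw [h, cr_self_right]
      · exact le_of_lt (hbr₁ u hu hua₁ h)
    · by_cases h : v = c₁
      · rw [h, cr_self_right]
      · exact le_of_lt (hbr₁ v hv hva₁ h)
    · intro h0
      by_contra h
      exact absurd h0 (ne_of_lt (hbr₁ u hu hua₁ h))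
    · intro h0
      by_contra h
      exact absurd h0 (ne_of_lt (hbr₁ v hv hva₁ h))

end Step

/-- Main construction: a non-crossing alternating Hamiltonian path on linearly
separated color classes, starting in class `A` (if `s = true`) or `C` (if `s = false`),
whose first vertex is an endpoint of the top bridge. -/
theorem core (t : ℝ) : ∀ (l : ℕ) (A C : Finset (ℝ × ℝ)) (s : Bool),
    (∀ a ∈ A, a.1 < t) → (∀ c ∈ C, t < c.1) →
    (∀ x ∈ A ∪ C, ∀ y ∈ A ∪ C, ∀ z ∈ A ∪ C, x ≠ y → x ≠ z → y ≠ z → cr x y z ≠ 0) →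
    (bif s then (C.card = A.card ∨ C.card + 1 = A.card)
      else (A.card = C.card ∨ A.card + 1 = C.card)) →
    A.card + C.card = l →
    ∃ L : List (ℝ × ℝ), L.length = l ∧ L.Nodup ∧ (∀ x ∈ L, x ∈ A ∪ C) ∧
      (∀ i, i < l → L.getD i 0 ∈
        (if i % 2 = 0 then (bif s then A else C) else (bif s then C else A))) ∧
      (A.Nonempty → C.Nonempty → ∃ a ∈ A, ∃ c ∈ C,
        (∀ w ∈ A ∪ C, w ≠ a → w ≠ c → cr a c w < 0) ∧
        L.getD 0 0 = (bif s then a else c)) ∧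
      (∀ i j, i + 2 ≤ j → j + 1 < l →
        segment ℝ (L.getD i 0) (L.getD (i+1) 0) ∩
          segment ℝ (L.getD j 0) (L.getD (j+1) 0) = (∅ : Set (ℝ × ℝ))) := by
  intro l
  induction l with
  | zero =>
    intro A C s hA hC hgp hcond hsum
    refine ⟨[], rfl, List.nodup_nil, by simp, ?_, ?_, ?_⟩
    · intro i hi; omega
    · intro hAne _
      exfalso
      have : A.card = 0 := by omega
      rw [Finset.card_eq_zero] at this
      exact Finset.not_nonempty_empty (this ▸ hAne)
    · intro i j _ hj; omega
  | succ l IH =>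
    intro A C s hA hC hgp hcond hsum
    cases s with
    | true =>
      simp only [Bool.cond_true] at hcond ⊢
      have hAne : A.Nonempty := by
        rw [← Finset.card_pos]
        rcases hcond with h | h <;> omega
      rcases C.eq_empty_or_nonempty with hCe | hCne
      · -- C empty: a single vertex
        subst hCe
        simp only [Finset.card_empty] at hcond hsum
        have hA1 : A.card = 1 := by rcases hcond with h | h <;> omega
        have hl1 : l + 1 = 1 := by omega
        obtain ⟨a, ha⟩ := Finset.card_eq_one.mp hA1
        subst ha
        refine ⟨[a], by simpa using hl1.symm, List.nodup_singleton a, by simp, ?_, ?_, ?_⟩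
        · intro i hi
          have : i = 0 := by omega
          subst this
          simp
        · intro _ hCne'
          exact absurd hCne' (by simp)
        · intro i j _ hj; omega
      · -- main case
        obtain ⟨a₀, ha₀, c₀, hc₀, hbr₀⟩ := bridge_exists hA hC hgp hAne hCne
        have hsubAC : (A.erase a₀) ∪ C ⊆ A ∪ C :=
          Finset.union_subset_union (Finset.erase_subset _ _) le_rfl
        have hcard' : A.card - 1 = (A.erase a₀).card := (Finset.card_erase_of_mem ha₀).symm
        have hApos : 1 ≤ A.card := Finset.card_pos.mpr hAne
        obtain ⟨L', hlen', hnd', hmem', hpar', hinv', hnc'⟩ :=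
          IH (A.erase a₀) C false
            (fun a haa => hA a (Finset.mem_of_mem_erase haa)) hC
            (fun x hx y hy z hz => hgp x (hsubAC hx) y (hsubAC hy) z (hsubAC hz))
            (by simp only [Bool.cond_false]; rcases hcond with h | h <;> omega)
            (by rcases hcond with h | h <;> omega)
        have ha₀n : a₀ ∉ (A.erase a₀) ∪ C := by
          intro h
          rcases Finset.mem_union.mp h with h | h
          · exact (Finset.notMem_erase a₀ A) h
          · have h1 := hC a₀ h
            have h2 := hA a₀ ha₀
            linarith
        refine ⟨a₀ :: L', by simp [hlen'], ?_, ?_, ?_, ?_, ?_⟩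
        · exact List.nodup_cons.mpr ⟨fun h => ha₀n (hmem' a₀ h), hnd'⟩
        · intro x hx
          rcases List.mem_cons.mp hx with h | h
          · exact h ▸ Finset.mem_union_left _ ha₀
          · exact hsubAC (hmem' x h)
        · intro i hi
          match i with
          | 0 => simpa using ha₀
          | (i+1) =>
            have hp := hpar' i (by omega)
            simp only [Bool.cond_false] at hp
            simp only [List.getD_cons_succ]
            rcases Nat.mod_two_eq_zero_or_one i with h | h
            · rw [if_pos h] at hp
              rw [if_neg (by omega)]
              exact hp
            · rw [if_neg (by omega)] at hp
              rw [if_pos (by omega)]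
              exact Finset.mem_of_mem_erase hp
        · intro _ _
          exact ⟨a₀, ha₀, c₀, hc₀, hbr₀, by simp⟩
        · intro i j hij hj
          match i, j with
          | 0, (j+1) =>
            have hjge : 1 ≤ j := by omega
            have hjlt : j + 1 < l := by omega
            have hA'ne : (A.erase a₀).Nonempty := by
              rw [← Finset.card_pos]
              rcases hcond with h | h <;> omega
            obtain ⟨a₁, ha₁, c₁, hc₁, hbr₁, hhead⟩ := hinv' hA'ne hCne
            simp only [Bool.cond_false] at hhead
            simp only [List.getD_cons_succ, List.getD_cons_zero]
            rw [hhead]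
            have hul : j < L'.length := by omega
            have hvl : j + 1 < L'.length := by omega
            have h0l : 0 < L'.length := by omega
            have hu := hmem' _ (getD_mem hul)
            have hv := hmem' _ (getD_mem hvl)
            have huc₁ : L'.getD j 0 ≠ c₁ := by
              rw [← hhead]
              exact getD_ne hnd' hul h0l (by omega)
            have hvc₁ : L'.getD (j+1) 0 ≠ c₁ := by
              rw [← hhead]
              exact getD_ne hnd' hvl h0l (by omega)
            have huv : L'.getD j 0 ≠ L'.getD (j+1) 0 := getD_ne hnd' hul hvl (by omega)
            exact step_disj_left hA hC hgp ha₀ hc₀ hbr₀ ha₁ hc₁ hbr₁ hu hv huc₁ hvc₁ huv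
          | (i+1), (j+1) =>
            simp only [List.getD_cons_succ]
            exact hnc' i j (by omega) (by omega)
    | false =>
      simp only [Bool.cond_false] at hcond ⊢
      have hCne : C.Nonempty := by
        rw [← Finset.card_pos]
        rcases hcond with h | h <;> omega
      rcases A.eq_empty_or_nonempty with hAe | hAne
      · subst hAe
        simp only [Finset.card_empty] at hcond hsum
        have hC1 : C.card = 1 := by rcases hcond with h | h <;> omega
        have hl1 : l + 1 = 1 := by omega
        obtain ⟨c, hc⟩ := Finset.card_eq_one.mp hC1
        subst hc
        refine ⟨[c], by simpa using hl1.symm, List.nodup_singleton c, by simp, ?_, ?_, ?_⟩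
        · intro i hi
          have : i = 0 := by omega
          subst this
          simp
        · intro hAne' _
          exact absurd hAne' (by simp)
        · intro i j _ hj; omega
      · obtain ⟨a₀, ha₀, c₀, hc₀, hbr₀⟩ := bridge_exists hA hC hgp hAne hCne
        have hsubAC : A ∪ (C.erase c₀) ⊆ A ∪ C :=
          Finset.union_subset_union le_rfl (Finset.erase_subset _ _)
        have hcard' : C.card - 1 = (C.erase c₀).card := (Finset.card_erase_of_mem hc₀).symm
        have hCpos : 1 ≤ C.card := Finset.card_pos.mpr hCne
        obtain ⟨L', hlen', hnd', hmem', hpar', hinv', hnc'⟩ :=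
          IH A (C.erase c₀) true
            hA (fun c hcc => hC c (Finset.mem_of_mem_erase hcc))
            (fun x hx y hy z hz => hgp x (hsubAC hx) y (hsubAC hy) z (hsubAC hz))
            (by simp only [Bool.cond_true]; rcases hcond with h | h <;> omega)
            (by rcases hcond with h | h <;> omega)
        have hc₀n : c₀ ∉ A ∪ (C.erase c₀) := by
          intro h
          rcases Finset.mem_union.mp h with h | h
          · have h1 := hA c₀ h
            have h2 := hC c₀ hc₀
            linarith
          · exact (Finset.notMem_erase c₀ C) h
        refine ⟨c₀ :: L', by simp [hlen'], ?_, ?_, ?_, ?_, ?_⟩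
        · exact List.nodup_cons.mpr ⟨fun h => hc₀n (hmem' c₀ h), hnd'⟩
        · intro x hx
          rcases List.mem_cons.mp hx with h | h
          · exact h ▸ Finset.mem_union_right _ hc₀
          · exact hsubAC (hmem' x h)
        · intro i hi
          match i with
          | 0 => simpa using hc₀
          | (i+1) =>
            have hp := hpar' i (by omega)
            simp only [Bool.cond_true] at hp
            simp only [List.getD_cons_succ]
            rcases Nat.mod_two_eq_zero_or_one i with h | h
            · rw [if_pos h] at hp
              rw [if_neg (by omega)]
              exact hp
            · rw [if_neg (by omega)] at hp
              rw [if_pos (by omega)]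
              exact Finset.mem_of_mem_erase hp
        · intro _ _
          exact ⟨a₀, ha₀, c₀, hc₀, hbr₀, by simp⟩
        · intro i j hij hj
          match i, j with
          | 0, (j+1) =>
            have hjge : 1 ≤ j := by omega
            have hjlt : j + 1 < l := by omega
            have hC'ne : (C.erase c₀).Nonempty := by
              rw [← Finset.card_pos]
              rcases hcond with h | h <;> omega
            obtain ⟨a₁, ha₁, c₁, hc₁, hbr₁, hhead⟩ := hinv' hAne hC'ne
            simp only [Bool.cond_true] at hhead
            simp only [List.getD_cons_succ, List.getD_cons_zero]
            rw [hhead]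
            have hul : j < L'.length := by omega
            have hvl : j + 1 < L'.length := by omega
            have h0l : 0 < L'.length := by omega
            have hu := hmem' _ (getD_mem hul)
            have hv := hmem' _ (getD_mem hvl)
            have hua₁ : L'.getD j 0 ≠ a₁ := by
              rw [← hhead]
              exact getD_ne hnd' hul h0l (by omega)
            have hva₁ : L'.getD (j+1) 0 ≠ a₁ := by
              rw [← hhead]
              exact getD_ne hnd' hvl h0l (by omega)
            have huv : L'.getD j 0 ≠ L'.getD (j+1) 0 := getD_ne hnd' hul hvl (by omega)
            exact step_disj_right hA hC hgp ha₀ hc₀ hbr₀ ha₁ hc₁ hbr₁ hu hv hua₁ hva₁ huv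
          | (i+1), (j+1) =>
            simp only [List.getD_cons_succ]
            exact hnc' i j (by omega) (by omega)


def phi (c : ℝ) : Pt →ₗ[ℝ] ℝ × ℝ where
  toFun p := (p 0 + c * p 1, p 1)
  map_add' p q := by
    simp only [PiLp.add_apply, Prod.mk_add_mk, Prod.mk.injEq]
    exact ⟨by ring, trivial⟩
  map_smul' r p := by
    simp only [PiLp.smul_apply, smul_eq_mul, RingHom.id_apply, Prod.smul_mk, Prod.mk.injEq]
    exact ⟨by ring, trivial⟩

lemma pt_ext {p q : Pt} (h0 : p 0 = q 0) (h1 : p 1 = q 1) : p = q := by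
  refine PiLp.ext fun i => ?_
  fin_cases i <;> assumption

lemma phi_inj (c : ℝ) : Function.Injective (phi c) := by
  intro p q h
  rw [Prod.ext_iff] at h
  obtain ⟨h1, h2⟩ := h
  simp only [phi, LinearMap.coe_mk, AddHom.coe_mk] at h1 h2
  exact pt_ext (by linarith [h2 ▸ h1]) h2

lemma dep {u v : ℝ × ℝ} (h : u.1 * v.2 - u.2 * v.1 = 0) :
    (∃ r : ℝ, v = r • u) ∨ (∃ r : ℝ, u = r • v) := by
  by_cases hu1 : u.1 = 0
  · by_cases hu2 : u.2 = 0
    · right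
      exact ⟨0, by rw [zero_smul]; exact Prod.ext hu1 hu2⟩
    · left
      refine ⟨v.2 / u.2, Prod.ext ?_ ?_⟩
      · simp only [Prod.smul_fst, smul_eq_mul, hu1, mul_zero]
        rw [hu1] at h
        have : u.2 * v.1 = 0 := by linarith
        rcases mul_eq_zero.mp this with h' | h'
        · exact absurd h' hu2
        · exact h'
      · simp only [Prod.smul_snd, smul_eq_mul]
        field_simp
  · left
    refine ⟨v.1 / u.1, Prod.ext ?_ ?_⟩
    · simp only [Prod.smul_fst, smul_eq_mul]
      field_simp
    · simp only [Prod.smul_snd, smul_eq_mul]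
      field_simp
      nlinarith [h]


lemma collinear_of_cr_zero {c : ℝ} {x y z : Pt}
    (h : cr (phi c x) (phi c y) (phi c z) = 0) :
    Collinear ℝ ({x, y, z} : Set Pt) := by
  have hd : ((phi c) (y - x)).1 * ((phi c) (z - x)).2
      - ((phi c) (y - x)).2 * ((phi c) (z - x)).1 = 0 := by
    simp only [map_sub, Prod.fst_sub, Prod.snd_sub]
    unfold cr at h
    linarith [h]
  rcases dep hd with ⟨r, hr⟩ | ⟨r, hr⟩
  · -- z - x = r • (y - x)
    have hzx : z - x = r • (y - x) := by
      apply phi_inj c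
      rw [map_smul, ← hr]
    rw [collinear_iff_of_mem (Set.mem_insert x {y, z})]
    refine ⟨y - x, ?_⟩
    intro p hp
    rcases hp with rfl | rfl | rfl
    · exact ⟨0, by simp⟩
    · exact ⟨1, by simp⟩
    · exact ⟨r, by rw [← hzx]; simp⟩
  · have hyx : y - x = r • (z - x) := by
      apply phi_inj c
      rw [map_smul, ← hr]
    rw [collinear_iff_of_mem (Set.mem_insert x {y, z})]
    refine ⟨z - x, ?_⟩
    intro p hp
    rcases hp with rfl | rfl | rfl
    · exact ⟨0, by simp⟩
    · exact ⟨r, by rw [← hyx]; simp⟩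
    · exact ⟨1, by simp⟩

lemma take_smallest {α : Type*} [DecidableEq α] (e : α → ℝ) (F : Finset α)
    (hinj : ∀ p ∈ F, ∀ q ∈ F, p ≠ q → e p ≠ e q) :
    ∀ j, j ≤ F.card → ∃ G ⊆ F, G.card = j ∧ ∀ p ∈ G, ∀ q ∈ F \ G, e p < e q := by
  intro j
  induction j with
  | zero => exact fun _ => ⟨∅, Finset.empty_subset F, Finset.card_empty, by simp⟩
  | succ j IHj =>
    intro hj
    obtain ⟨G, hG, hcard, hsep⟩ := IHj (by omega)
    have hne : (F \ G).Nonempty := by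
      rw [← Finset.card_pos, Finset.card_sdiff_of_subset hG]
      omega
    obtain ⟨q₀, hq₀, hmin⟩ := (F \ G).exists_min_image e hne
    refine ⟨insert q₀ G, ?_, ?_, ?_⟩
    · exact Finset.insert_subset ((Finset.mem_sdiff.mp hq₀).1) hG
    · rw [Finset.card_insert_of_notMem (Finset.mem_sdiff.mp hq₀).2, hcard]
    · intro p hp q hq
      have hq' : q ∈ F \ G := Finset.sdiff_subset_sdiff le_rfl (Finset.subset_insert q₀ G) hq
      rcases Finset.mem_insert.mp hp with rfl | hp'
      · have hle := hmin q hq'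
        have hne' : q ≠ p := by
          intro h
          subst h
          exact (Finset.mem_sdiff.mp hq).2 (Finset.mem_insert_self q G)
        exact lt_of_le_of_ne hle (hinj p (Finset.mem_sdiff.mp hq₀).1 q
          (Finset.mem_sdiff.mp hq').1 (Ne.symm hne') )
      · exact hsep p hp' q hq'

lemma image_inter_seg (f : Pt →ₗ[ℝ] ℝ × ℝ) (x y u v : Pt) (hf : Function.Injective f) :
    f '' (segment ℝ x y ∩ segment ℝ u v) =
      segment ℝ (f x) (f y) ∩ segment ℝ (f u) (f v) := by
  have key : ∀ a b : Pt, ⇑f '' segment ℝ a b = segment ℝ (f a) (f b) := by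
    intro a b
    have := image_segment ℝ f.toAffineMap a b
    simpa using this
  rw [Set.image_inter hf, key, key]

lemma image_eq_singleton {f : Pt → ℝ × ℝ} (hf : Function.Injective f) {S : Set Pt} {y : Pt}
    (h : f '' S = {f y}) : S = {y} := by
  apply Set.eq_singleton_iff_unique_mem.mpr
  constructor
  · have : f y ∈ f '' S := by rw [h]; exact rfl
    obtain ⟨x, hx, hxy⟩ := this
    rwa [hf hxy] at hx
  · intro x hx
    have : f x ∈ f '' S := Set.mem_image_of_mem f hx
    rw [h] at this
    exact hf this

lemma image_eq_empty' {f : Pt → ℝ × ℝ} {S : Set Pt} (h : f '' S = ∅) : S = ∅ :=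
  Set.image_eq_empty.mp h


end AltPath


open AltPath

/-- For disjoint sets `R` of red and `B` of blue points with
`|R| = |B| = n` and `R ∪ B` in general position, there is an alternating non-crossing path on
`R ∪ B` visiting at least `n` of the `2n` points. -/
theorem alternating_path_half_of_points
    (n : ℕ) (R B : Set Pt) (hRfin : R.Finite) (hBfin : B.Finite)
    (hdisj : Disjoint R B)
    (hR : R.ncard = n) (hB : B.ncard = n)
    (hgp : GenPos (R ∪ B)) :
    ∃ (m : ℕ) (q : ℕ → Pt), n ≤ m ∧ Set.InjOn q (Set.Iio m) ∧
      q '' Set.Iio m ⊆ R ∪ B ∧ Alternating R B m q ∧ NonCrossing m q := by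
  classical
  rcases Nat.eq_zero_or_pos n with hn0 | hnpos
  · subst hn0
    refine ⟨0, fun _ => 0, le_rfl, ?_, ?_, ?_, ?_⟩
    · intro i hi
      simp at hi
    · rintro x ⟨i, hi, rfl⟩
      simp at hi
    · intro i hi
      omega
    · intro i j hi hj hij
      omega
  set FR := hRfin.toFinset with hFRdef
  set FB := hBfin.toFinset with hFBdef
  set F := FR ∪ FB with hFdef
  have hFRcard : FR.card = n := by
    rw [← hR]
    exact (Set.ncard_eq_toFinset_card R hRfin).symm
  have hFBcard : FB.card = n := by
    rw [← hB]
    exact (Set.ncard_eq_toFinset_card B hBfin).symm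
  have hdisjF : Disjoint FR FB := Set.Finite.disjoint_toFinset.mpr hdisj
  have hFcard : F.card = 2 * n := by
    rw [hFdef, Finset.card_union_of_disjoint hdisjF]
    omega
  have hFsub : ∀ p ∈ F, p ∈ R ∪ B := by
    intro p hp
    rcases Finset.mem_union.mp hp with h | h
    · exact Or.inl ((Set.Finite.mem_toFinset hRfin).mp h)
    · exact Or.inr ((Set.Finite.mem_toFinset hBfin).mp h)
  obtain ⟨c, hc⟩ := Infinite.exists_notMem_finset
    ((F ×ˢ F).image fun pq => -(pq.1 0 - pq.2 0) / (pq.1 1 - pq.2 1))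
  set e : Pt → ℝ := fun p => (phi c p).1 with hedef
  have heval : ∀ p : Pt, e p = p 0 + c * p 1 := fun p => rfl
  have heinj : ∀ p ∈ F, ∀ q ∈ F, p ≠ q → e p ≠ e q := by
    intro p hp q hq hpq heq
    rw [heval, heval] at heq
    by_cases h11 : p 1 = q 1
    · exact hpq (pt_ext (by rw [h11] at heq; linarith) h11)
    · apply hc
      apply Finset.mem_image.mpr
      refine ⟨(p, q), Finset.mem_product.mpr ⟨hp, hq⟩, ?_⟩
      have hne : p 1 - q 1 ≠ 0 := fun h => h11 (by linarith)
      field_simp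
      linarith
  obtain ⟨G, hGsub, hGcard, hGsep⟩ := take_smallest e F heinj n (by omega)
  have hGne : G.Nonempty := by rw [← Finset.card_pos]; omega
  have hFGne : (F \ G).Nonempty := by
    rw [← Finset.card_pos, Finset.card_sdiff_of_subset hGsub]
    omega
  obtain ⟨t, hGt, hFGt⟩ : ∃ t : ℝ, (∀ p ∈ G, e p < t) ∧ (∀ p ∈ F \ G, t < e p) := by
    have hlt : (G.image e).max' (hGne.image e) < ((F \ G).image e).min' (hFGne.image e) := by
      obtain ⟨p₀, hp₀, hp₀e⟩ := Finset.mem_image.mp ((G.image e).max'_mem (hGne.image e))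
      obtain ⟨q₀, hq₀, hq₀e⟩ := Finset.mem_image.mp (((F \ G).image e).min'_mem (hFGne.image e))
      rw [← hp₀e, ← hq₀e]
      exact hGsep p₀ hp₀ q₀ hq₀
    refine ⟨((G.image e).max' (hGne.image e) + ((F \ G).image e).min' (hFGne.image e)) / 2,
      ?_, ?_⟩
    · intro p hp
      have := Finset.le_max' (G.image e) (e p) (Finset.mem_image_of_mem e hp)
      linarith
    · intro p hp
      have := Finset.min'_le ((F \ G).image e) (e p) (Finset.mem_image_of_mem e hp)
      linarith
  have hsplitG : (FR ∩ G).card + (FB ∩ G).card = n := by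
    have hun : (FR ∩ G) ∪ (FB ∩ G) = G := by
      rw [← Finset.union_inter_distrib_right]
      exact Finset.inter_eq_right.mpr hGsub
    have hdg : Disjoint (FR ∩ G) (FB ∩ G) :=
      hdisjF.mono Finset.inter_subset_left Finset.inter_subset_left
    rw [← Finset.card_union_of_disjoint hdg, hun, hGcard]
  have hRsplit : (FR ∩ G).card + (FR \ G).card = n := by
    rw [Finset.card_inter_add_card_sdiff, hFRcard]
  have hBsplit : (FB ∩ G).card + (FB \ G).card = n := by
    rw [Finset.card_inter_add_card_sdiff, hFBcard]
  obtain ⟨A₀, C₀, k, hA₀G, hC₀G, hkA, hkC, h2k, hclass⟩ :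
      ∃ (A₀ C₀ : Finset Pt) (k : ℕ), A₀ ⊆ G ∧ C₀ ⊆ F \ G ∧ A₀.card = k ∧ C₀.card = k ∧
        n ≤ 2 * k ∧ ((↑A₀ ⊆ R ∧ ↑C₀ ⊆ B) ∨ (↑A₀ ⊆ B ∧ ↑C₀ ⊆ R)) := by
    by_cases hk : n ≤ 2 * (FR ∩ G).card
    · refine ⟨FR ∩ G, FB \ G, (FR ∩ G).card, Finset.inter_subset_right,
        Finset.sdiff_subset_sdiff Finset.subset_union_right le_rfl, rfl, by omega, hk,
        Or.inl ⟨?_, ?_⟩⟩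
      · intro x hx
        exact (Set.Finite.mem_toFinset hRfin).mp
          (Finset.inter_subset_left (Finset.mem_coe.mp hx))
      · intro x hx
        exact (Set.Finite.mem_toFinset hBfin).mp
          ((Finset.sdiff_subset) (Finset.mem_coe.mp hx))
    · refine ⟨FB ∩ G, FR \ G, n - (FR ∩ G).card, Finset.inter_subset_right,
        Finset.sdiff_subset_sdiff Finset.subset_union_left le_rfl, by omega, by omega,
        by omega, Or.inr ⟨?_, ?_⟩⟩
      · intro x hx
        exact (Set.Finite.mem_toFinset hBfin).mp
          (Finset.inter_subset_left (Finset.mem_coe.mp hx))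
      · intro x hx
        exact (Set.Finite.mem_toFinset hRfin).mp
          ((Finset.sdiff_subset) (Finset.mem_coe.mp hx))
  set A := A₀.image (phi c) with hAdef
  set C := C₀.image (phi c) with hCdef
  have hphiInj := phi_inj c
  have hAcard : A.card = k := by rw [hAdef, Finset.card_image_of_injective _ hphiInj, hkA]
  have hCcard : C.card = k := by rw [hCdef, Finset.card_image_of_injective _ hphiInj, hkC]
  have hA₀F : A₀ ⊆ F := hA₀G.trans hGsub
  have hC₀F : C₀ ⊆ F := hC₀G.trans Finset.sdiff_subset
  have hAt : ∀ a ∈ A, a.1 < t := by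
    intro a ha
    obtain ⟨p, hp, rfl⟩ := Finset.mem_image.mp ha
    exact hGt p (hA₀G hp)
  have hCt : ∀ a ∈ C, t < a.1 := by
    intro a ha
    obtain ⟨p, hp, rfl⟩ := Finset.mem_image.mp ha
    exact hFGt p (hC₀G hp)
  have hmemF : ∀ w ∈ A ∪ C, ∃ p ∈ A₀ ∪ C₀, phi c p = w := by
    intro w hw
    rcases Finset.mem_union.mp hw with h | h
    · obtain ⟨p, hp, he⟩ := Finset.mem_image.mp h
      exact ⟨p, Finset.mem_union_left _ hp, he⟩
    · obtain ⟨p, hp, he⟩ := Finset.mem_image.mp h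
      exact ⟨p, Finset.mem_union_right _ hp, he⟩
  have hA₀C₀F : ∀ p ∈ A₀ ∪ C₀, p ∈ F := by
    intro p hp
    rcases Finset.mem_union.mp hp with h | h
    · exact hA₀F h
    · exact hC₀F h
  have hgpV : ∀ x ∈ A ∪ C, ∀ y ∈ A ∪ C, ∀ z ∈ A ∪ C,
      x ≠ y → x ≠ z → y ≠ z → cr x y z ≠ 0 := by
    intro x hx y hy z hz hxy hxz hyz h0
    obtain ⟨px, hpx, hex⟩ := hmemF x hx
    obtain ⟨py, hpy, hey⟩ := hmemF y hy
    obtain ⟨pz, hpz, hez⟩ := hmemF z hz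
    rw [← hex, ← hey, ← hez] at h0
    have hcol := collinear_of_cr_zero h0
    exact hgp px (hFsub px (hA₀C₀F px hpx)) py (hFsub py (hA₀C₀F py hpy))
      pz (hFsub pz (hA₀C₀F pz hpz))
      (fun h => hxy (by rw [← hex, ← hey, h]))
      (fun h => hxz (by rw [← hex, ← hez, h]))
      (fun h => hyz (by rw [← hey, ← hez, h])) hcol
  obtain ⟨L, hlen, hnd, hmemL, hpar, hinv, hnc⟩ :=
    core t (2 * k) A C true hAt hCt hgpV (by simp only [Bool.cond_true]; omega) (by omega)
  set q : ℕ → Pt := fun i => Function.invFun (phi c) (L.getD i 0) with hqdef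
  have hq : ∀ i, i < 2 * k → phi c (q i) = L.getD i 0 ∧ q i ∈ A₀ ∪ C₀ := by
    intro i hi
    have hmem := hmemL _ (getD_mem (by omega : i < L.length))
    obtain ⟨p, hp, he⟩ := hmemF _ hmem
    have hqp : q i = p := by
      rw [hqdef]
      simp only
      rw [← he]
      exact Function.leftInverse_invFun hphiInj p
    rw [hqp]
    exact ⟨he, hp⟩
  have hback : ∀ r, r < 2 * k → (L.getD r 0 ∈ A → q r ∈ A₀) ∧ (L.getD r 0 ∈ C → q r ∈ C₀) := by
    intro r hr
    constructor
    · intro h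
      obtain ⟨p, hp, he⟩ := Finset.mem_image.mp h
      have heq : p = q r := hphiInj (by rw [he, (hq r hr).1])
      rwa [← heq]
    · intro h
      obtain ⟨p, hp, he⟩ := Finset.mem_image.mp h
      have heq : p = q r := hphiInj (by rw [he, (hq r hr).1])
      rwa [← heq]
  refine ⟨2 * k, q, by omega, ?_, ?_, ?_, ?_⟩
  · intro i hi j hj hqij
    simp only [Set.mem_Iio] at hi hj
    by_contra hij
    exact getD_ne hnd (by omega) (by omega) hij (by rw [← (hq i hi).1, ← (hq j hj).1, hqij])
  · rintro x ⟨i, hi, rfl⟩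
    simp only [Set.mem_Iio] at hi
    have hmem := (hq i hi).2
    rcases Finset.mem_union.mp hmem with h | h
    · rcases hclass with ⟨h1, _⟩ | ⟨h1, _⟩
      · exact Or.inl (h1 (Finset.mem_coe.mpr h))
      · exact Or.inr (h1 (Finset.mem_coe.mpr h))
    · rcases hclass with ⟨_, h2⟩ | ⟨_, h2⟩
      · exact Or.inr (h2 (Finset.mem_coe.mpr h))
      · exact Or.inl (h2 (Finset.mem_coe.mpr h))
  · -- Alternating
    intro i hi
    have hpi := hpar i (by omega)
    have hpsi := hpar (i + 1) (by omega)
    simp only [Bool.cond_true] at hpi hpsi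
    have hbk := hback i (by omega)
    have hbks := hback (i + 1) (by omega)
    rcases Nat.mod_two_eq_zero_or_one i with h2 | h2
    · rw [if_pos h2] at hpi
      rw [if_neg (by omega)] at hpsi
      have hqA := hbk.1 hpi
      have hqC := hbks.2 hpsi
      rcases hclass with ⟨h1, h2'⟩ | ⟨h1, h2'⟩
      · exact Or.inl ⟨h1 (Finset.mem_coe.mpr hqA), h2' (Finset.mem_coe.mpr hqC)⟩
      · exact Or.inr ⟨h1 (Finset.mem_coe.mpr hqA), h2' (Finset.mem_coe.mpr hqC)⟩
    · rw [if_neg (by omega)] at hpi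
      rw [if_pos (by omega)] at hpsi
      have hqC := hbk.2 hpi
      have hqA := hbks.1 hpsi
      rcases hclass with ⟨h1, h2'⟩ | ⟨h1, h2'⟩
      · exact Or.inr ⟨h2' (Finset.mem_coe.mpr hqC), h1 (Finset.mem_coe.mpr hqA)⟩
      · exact Or.inl ⟨h2' (Finset.mem_coe.mpr hqC), h1 (Finset.mem_coe.mpr hqA)⟩
  · -- NonCrossing
    intro i j hi hj hij
    constructor
    · intro hji
      subst hji
      have hi2 : i + 2 < 2 * k := by omega
      have hcr : cr (L.getD i 0) (L.getD (i + 1) 0) (L.getD (i + 2) 0) ≠ 0 := by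
        apply hgpV _ (hmemL _ (getD_mem (by omega))) _ (hmemL _ (getD_mem (by omega)))
          _ (hmemL _ (getD_mem (by omega)))
        · exact getD_ne hnd (by omega) (by omega) (by omega)
        · exact getD_ne hnd (by omega) (by omega) (by omega)
        · exact getD_ne hnd (by omega) (by omega) (by omega)
      have hV := seg_consec hcr
      have himg := image_inter_seg (phi c) (q i) (q (i + 1)) (q (i + 1)) (q (i + 2)) hphiInj
      rw [(hq i (by omega)).1, (hq (i + 1) (by omega)).1, (hq (i + 2) (by omega)).1, hV,
        ← (hq (i + 1) (by omega)).1] at himg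
      exact image_eq_singleton hphiInj himg
    · intro hji
      have hV := hnc i j (by omega) (by omega)
      have himg := image_inter_seg (phi c) (q i) (q (i + 1)) (q j) (q (j + 1)) hphiInj
      rw [(hq i (by omega)).1, (hq (i + 1) (by omega)).1, (hq j (by omega)).1,
        (hq (j + 1) (by omega)).1, hV] at himg
      exact image_eq_empty' himg
end
end

section
/- Let e₁, e₂, e₃ be points in ℝ², let S = conv{e₁, e₂, e₃}, and let F₁, F₂, F₃ be closed subsets of S such that for every subset A ⊆ {1, 2, 3}, conv{e_i : i ∈ A} ⊆ ⋃_{i ∈ A} F_i. Then F₁ ∩ F₂ ∩ F₃ is compact and non-empty. -/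
noncomputable section

open Finset

namespace SpernerAux

def g (a b : Fin 3) : ZMod 2 := if (a = 0 ∧ b = 1) ∨ (a = 1 ∧ b = 0) then 1 else 0

/-- The grid `{(x,y) : x + y ≤ m}`. -/
def I (m : ℕ) : Finset (ℕ × ℕ) :=
  (Finset.range (m+1) ×ˢ Finset.range (m+1)).filter (fun p => p.1 + p.2 ≤ m)

lemma mem_I {m : ℕ} {p : ℕ × ℕ} : p ∈ I m ↔ p.1 + p.2 ≤ m := by
  simp only [I, mem_filter, mem_product, mem_range]
  omega

/-- The grid `{(x,y) : x + y + 1 ≤ m}`. -/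
def K (m : ℕ) : Finset (ℕ × ℕ) := (I m).filter (fun p => p.1 + p.2 + 1 ≤ m)

lemma mem_K {m : ℕ} {p : ℕ × ℕ} : p ∈ K m ↔ p.1 + p.2 + 1 ≤ m := by
  simp only [K, mem_filter, mem_I]; omega

variable (χ : ℕ → ℕ → Fin 3)

def gH (x y : ℕ) : ZMod 2 := g (χ x y) (χ (x+1) y)
def gV (x y : ℕ) : ZMod 2 := g (χ x y) (χ x (y+1))
def gD (x y : ℕ) : ZMod 2 := g (χ (x+1) y) (χ x (y+1))

def TU (x y : ℕ) : ZMod 2 := gH χ x y + gV χ x y + gD χ x y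
def TD (x y : ℕ) : ZMod 2 := gD χ x y + gV χ (x+1) y + gH χ x (y+1)

/-- shift reindexing in `x`: -/
lemma shiftx (m : ℕ) (f : ℕ → ℕ → ZMod 2) :
    ∑ p ∈ I m, f p.1 p.2 + ∑ p ∈ K m, f (p.1+1) p.2 = ∑ y ∈ range (m+1), f 0 y := by
  have himg : (K m).image (fun p => (p.1+1, p.2)) = (I m).filter (fun p => p.1 ≠ 0) := by
    ext ⟨a, b⟩
    simp only [mem_image, mem_filter, mem_I, mem_K, Prod.ext_iff]
    constructor
    · rintro ⟨⟨x, y⟩, h, rfl, rfl⟩; omega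
    · rintro ⟨h1, h2⟩; exact ⟨(a-1, b), by omega, by omega, rfl⟩
  have hinj : Set.InjOn (fun p : ℕ × ℕ => (p.1+1, p.2)) (K m) := by
    intro p _ q _ h
    simpa [Prod.ext_iff] using h
  have h1 : ∑ p ∈ K m, f (p.1+1) p.2 = ∑ p ∈ (I m).filter (fun p => p.1 ≠ 0), f p.1 p.2 := by
    rw [← himg, Finset.sum_image (fun p hp q hq h => hinj hp hq h)]
  have h2 : ∑ p ∈ (I m).filter (fun p => ¬ p.1 ≠ 0), f p.1 p.2 = ∑ y ∈ range (m+1), f 0 y := by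
    apply Finset.sum_nbij' (fun p => p.2) (fun y => (0, y))
    · intro p hp; simp only [mem_filter, mem_I, not_not] at hp; simp only [mem_range]; omega
    · intro y hy; simp only [mem_range] at hy; simp only [mem_filter, mem_I, not_not]
      exact ⟨by omega, trivial⟩
    · intro p hp; simp only [mem_filter, not_not] at hp; exact Prod.ext hp.2.symm rfl
    · intro y hy; rfl
    · intro p hp; simp only [mem_filter, not_not] at hp; rw [hp.2]
  rw [h1, ← h2, ← Finset.sum_filter_add_sum_filter_not (I m) (fun p => p.1 ≠ 0) (fun p => f p.1 p.2)]
  rw [add_right_comm, CharTwo.add_self_eq_zero, zero_add]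

lemma shifty (m : ℕ) (f : ℕ → ℕ → ZMod 2) :
    ∑ p ∈ I m, f p.1 p.2 + ∑ p ∈ K m, f p.1 (p.2+1) = ∑ x ∈ range (m+1), f x 0 := by
  have := shiftx m (fun x y => f y x)
  have hsw : ∀ (s : Finset (ℕ × ℕ)) (F : ℕ → ℕ → ZMod 2),
      (∀ p : ℕ × ℕ, ((p.2, p.1) ∈ s ↔ p ∈ s)) → ∑ p ∈ s, F p.2 p.1 = ∑ p ∈ s, F p.1 p.2 := by
    intro s F hs
    apply Finset.sum_nbij' (fun p => (p.2, p.1)) (fun p => (p.2, p.1))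
    · intro p hp; exact (hs p).mpr hp
    · intro p hp; exact (hs p).mpr hp
    · intro p _; rfl
    · intro p _; rfl
    · intro p _; rfl
  rw [hsw (I m) f (by intro p; simp [mem_I]; omega), hsw (K m) (fun x y => f x (y+1)) (by intro p; simp [mem_K]; omega)] at this
  exact this

lemma diag (m : ℕ) (f : ℕ → ℕ → ZMod 2) :
    ∑ p ∈ I m, f p.1 p.2 + ∑ p ∈ K m, f p.1 p.2 = ∑ x ∈ range (m+1), f x (m - x) := by
  have h2 : ∑ p ∈ (I m).filter (fun p => ¬ p.1 + p.2 + 1 ≤ m), f p.1 p.2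
      = ∑ x ∈ range (m+1), f x (m - x) := by
    apply Finset.sum_nbij' (fun p => p.1) (fun x => (x, m - x))
    · intro p hp; simp only [mem_filter, mem_I] at hp; simp only [mem_range]; omega
    · intro x hx; simp only [mem_range] at hx; simp only [mem_filter, mem_I]
      omega
    · intro p hp; simp only [mem_filter, mem_I] at hp
      exact Prod.ext rfl (by omega)
    · intro y hy; rfl
    · intro p hp; simp only [mem_filter, mem_I] at hp
      congr 1; omega
  rw [← h2, ← Finset.sum_filter_add_sum_filter_not (I m) (fun p => p.1 + p.2 + 1 ≤ m) (fun p => f p.1 p.2)]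
  show _ + _ + _ = _
  rw [show K m = (I m).filter (fun p => p.1 + p.2 + 1 ≤ m) from rfl]
  rw [add_right_comm, CharTwo.add_self_eq_zero, zero_add]

/-- The key counting identity. -/
lemma counting (m : ℕ) :
    ∑ p ∈ I m, TU χ p.1 p.2 + ∑ p ∈ K m, TD χ p.1 p.2
      = ∑ x ∈ range (m+1), gD χ x (m - x) + ∑ x ∈ range (m+1), gH χ x 0
        + ∑ y ∈ range (m+1), gV χ 0 y := by
  have hU : ∑ p ∈ I m, TU χ p.1 p.2
      = ∑ p ∈ I m, gH χ p.1 p.2 + ∑ p ∈ I m, gV χ p.1 p.2 + ∑ p ∈ I m, gD χ p.1 p.2 := by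
    rw [← Finset.sum_add_distrib, ← Finset.sum_add_distrib]; rfl
  have hD : ∑ p ∈ K m, TD χ p.1 p.2
      = ∑ p ∈ K m, gD χ p.1 p.2 + ∑ p ∈ K m, gV χ (p.1+1) p.2 + ∑ p ∈ K m, gH χ p.1 (p.2+1) := by
    rw [← Finset.sum_add_distrib, ← Finset.sum_add_distrib]; rfl
  rw [hU, hD, ← shiftx m (gV χ), ← shifty m (gH χ), ← diag m (gD χ)]
  ring



def φ (a : Fin 3) : ZMod 2 := if a = 1 then 1 else 0

lemma g_eq_zero_left {a b : Fin 3} (ha : a ≠ 1) (hb : b ≠ 1) : g a b = 0 := by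
  unfold g; split_ifs with h
  · rcases h with ⟨h1,h2⟩|⟨h1,h2⟩ <;> simp_all
  · rfl

lemma g_eq_zero_not0 {a b : Fin 3} (ha : a ≠ 0) (hb : b ≠ 0) : g a b = 0 := by
  unfold g; split_ifs with h
  · rcases h with ⟨h1,h2⟩|⟨h1,h2⟩ <;> simp_all
  · rfl

lemma g_eq_phi {a b : Fin 3} (ha : a ≠ 2) (hb : b ≠ 2) : g a b = φ a + φ b := by
  fin_cases a <;> fin_cases b <;> simp_all <;> rfl

lemma rainbow {a b c : Fin 3} (h : g a b + g a c + g b c ≠ 0) :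
    ∀ i : Fin 3, i = a ∨ i = b ∨ i = c := by
  revert h; fin_cases a <;> fin_cases b <;> fin_cases c <;> decide



/-- Telescoping in `ZMod 2`. -/
lemma telescope (c : ℕ → ZMod 2) (N : ℕ) :
    ∑ x ∈ range N, (c (x+1) + c x) = c N + c 0 := by
  induction N with
  | zero => simp [CharTwo.add_self_eq_zero]
  | succ N ih =>
      rw [Finset.sum_range_succ, ih]
      have : ∀ a b d : ZMod 2, a + b + (d + a) = d + b := by decide
      apply this

lemma pick (A B C : ℕ × ℕ) (χ : ℕ → ℕ → Fin 3)
    (hr : ∀ i : Fin 3, i = χ A.1 A.2 ∨ i = χ B.1 B.2 ∨ i = χ C.1 C.2) :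
    ∃ p : Fin 3 → ℕ × ℕ, ∀ i, (p i = A ∨ p i = B ∨ p i = C) ∧ χ (p i).1 (p i).2 = i := by
  refine ⟨fun i => if χ A.1 A.2 = i then A else if χ B.1 B.2 = i then B else C, fun i => ?_⟩
  simp only
  split_ifs with u v
  · exact ⟨Or.inl rfl, u⟩
  · exact ⟨Or.inr (Or.inl rfl), v⟩
  · rcases hr i with h | h | h
    · exact absurd h.symm u
    · exact absurd h.symm v
    · exact ⟨Or.inr (Or.inr rfl), h.symm⟩

/-- **Sperner's lemma** for the triangular grid of size `n`. -/
theorem sperner (n : ℕ) (χ : ℕ → ℕ → Fin 3)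
    (h0 : ∀ x y, x + y ≤ n → χ x y = 0 → 0 < x)
    (h1 : ∀ x y, x + y ≤ n → χ x y = 1 → 0 < y)
    (h2 : ∀ x y, x + y ≤ n → χ x y = 2 → x + y < n) (hn : 0 < n) :
    ∃ p : Fin 3 → ℕ × ℕ,
      (∀ i, (p i).1 + (p i).2 ≤ n ∧ χ (p i).1 (p i).2 = i) ∧
      (∀ i j, (p i).1 ≤ (p j).1 + 1 ∧ (p i).2 ≤ (p j).2 + 1 ∧
        (p i).1 + (p i).2 ≤ (p j).1 + (p j).2 + 1) := by
  obtain ⟨m, rfl⟩ : ∃ m, n = m + 1 := ⟨n - 1, by omega⟩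
  set n := m + 1 with hn'
  -- boundary sums
  have hbH : ∑ x ∈ range (m+1), gH χ x 0 = 0 := by
    apply Finset.sum_eq_zero
    intro x hx
    simp only [mem_range] at hx
    apply g_eq_zero_left
    · intro h; exact absurd (h1 x 0 (by omega) h) (by omega)
    · intro h; exact absurd (h1 (x+1) 0 (by omega) h) (by omega)
  have hbV : ∑ y ∈ range (m+1), gV χ 0 y = 0 := by
    apply Finset.sum_eq_zero
    intro y hy
    simp only [mem_range] at hy
    apply g_eq_zero_not0
    · intro h; exact absurd (h0 0 y (by omega) h) (by omega)
    · intro h; exact absurd (h0 0 (y+1) (by omega) h) (by omega)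
  have hc2 : ∀ k, k ≤ n → χ k (n - k) ≠ 2 := by
    intro k hk h
    exact absurd (h2 k (n-k) (by omega) h) (by omega)
  have hbD : ∑ x ∈ range (m+1), gD χ x (m - x) = 1 := by
    have heq : ∀ x ∈ range (m+1), gD χ x (m - x)
        = φ (χ (x+1) (n - (x+1))) + φ (χ x (n - x)) := by
      intro x hx
      simp only [mem_range] at hx
      have e1 : m - x = n - (x+1) := by omega
      have e2 : m - x + 1 = n - x := by omega
      unfold gD
      rw [e1] at *
      rw [e2]
      exact g_eq_phi (hc2 (x+1) (by omega)) (hc2 x (by omega))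
    rw [Finset.sum_congr rfl heq, telescope (fun k => φ (χ k (n - k))) (m+1)]
    have hA : χ (m+1) (n - (m+1)) = 0 := by
      have t1 : χ (m+1) 0 ≠ 1 := fun h => absurd (h1 (m+1) 0 (by omega) h) (by omega)
      have t2 : χ (m+1) 0 ≠ 2 := fun h => absurd (h2 (m+1) 0 (by omega) h) (by omega)
      have : n - (m+1) = 0 := by omega
      rw [this]
      revert t1 t2; generalize χ (m+1) 0 = a; revert a; decide
    have hB : χ 0 (n - 0) = 1 := by
      have t1 : χ 0 n ≠ 0 := fun h => absurd (h0 0 n (by omega) h) (by omega)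
      have t2 : χ 0 n ≠ 2 := fun h => absurd (h2 0 n (by omega) h) (by omega)
      show χ 0 (n - 0) = 1
      have : n - 0 = n := by omega
      rw [this]
      revert t1 t2; generalize χ 0 n = a; revert a; decide
    rw [hA, hB]
    rfl
  -- the total is 1
  have htot : ∑ p ∈ I m, TU χ p.1 p.2 + ∑ p ∈ K m, TD χ p.1 p.2 = 1 := by
    rw [counting, hbH, hbV, hbD]; rfl
  -- hence some triangle is rainbow
  have hex : (∃ p ∈ I m, TU χ p.1 p.2 ≠ 0) ∨ (∃ p ∈ K m, TD χ p.1 p.2 ≠ 0) := by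
    by_contra h
    push_neg at h
    rw [Finset.sum_eq_zero h.1, Finset.sum_eq_zero h.2] at htot
    exact one_ne_zero htot.symm
  -- extract the rainbow triangle
  rcases hex with ⟨⟨x, y⟩, hp, hT⟩ | ⟨⟨x, y⟩, hp, hT⟩
  · rw [mem_I] at hp
    simp only at hp hT
    have hr := rainbow (a := χ x y) (b := χ (x+1) y) (c := χ x (y+1)) hT
    obtain ⟨p, hP⟩ := pick (x, y) (x+1, y) (x, y+1) χ hr
    refine ⟨p, fun i => ⟨?_, (hP i).2⟩, fun i j => ?_⟩
    · rcases (hP i).1 with h | h | h <;> rw [h] <;> simp <;> omega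
    · rcases (hP i).1 with hi | hi | hi <;> rcases (hP j).1 with hj | hj | hj <;>
        rw [hi, hj] <;> refine ⟨?_, ?_, ?_⟩ <;> simp <;> omega
  · rw [mem_K] at hp
    simp only at hp hT
    have hr := rainbow (a := χ (x+1) y) (b := χ x (y+1)) (c := χ (x+1) (y+1)) hT
    obtain ⟨p, hP⟩ := pick (x+1, y) (x, y+1) (x+1, y+1) χ hr
    refine ⟨p, fun i => ⟨?_, (hP i).2⟩, fun i j => ?_⟩
    · rcases (hP i).1 with h | h | h <;> rw [h] <;> simp <;> omega
    · rcases (hP i).1 with hi | hi | hi <;> rcases (hP j).1 with hj | hj | hj <;>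
        rw [hi, hj] <;> refine ⟨?_, ?_, ?_⟩ <;> simp <;> omega


section Geometry

open Filter

variable (e : Fin 3 → Pt)

/-- Barycentric weights of the grid point `(x, y)` in the triangle of size `n`. -/
def wf (n x y : ℕ) : Fin 3 → ℝ := ![(x : ℝ)/n, (y : ℝ)/n, ((n : ℝ) - x - y)/n]

/-- The grid point `(x, y)` of the triangulation of size `n`. -/
def Q (n x y : ℕ) : Pt := ∑ i, wf n x y i • e i

lemma wf_sum {n x y : ℕ} (hn : 0 < n) : ∑ i, wf n x y i = 1 := by
  have : (n : ℝ) ≠ 0 := Nat.cast_ne_zero.mpr hn.ne'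
  simp [wf, Fin.sum_univ_three]
  field_simp
  ring

lemma wf_nonneg {n x y : ℕ} (hxy : x + y ≤ n) (i : Fin 3) : 0 ≤ wf n x y i := by
  have h : (x : ℝ) + y ≤ n := by exact_mod_cast hxy
  have h0 : (0 : ℝ) ≤ n := Nat.cast_nonneg n
  fin_cases i
  · exact div_nonneg (Nat.cast_nonneg x) h0
  · exact div_nonneg (Nat.cast_nonneg y) h0
  · exact div_nonneg (by linarith) h0

lemma Q_dist {n : ℕ} (hn : 0 < n) {a b a' b' : ℕ}
    (h1 : a ≤ a' + 1) (h2 : a' ≤ a + 1) (h3 : b ≤ b' + 1) (h4 : b' ≤ b + 1)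
    (h5 : a + b ≤ a' + b' + 1) (h6 : a' + b' ≤ a + b + 1) :
    ‖Q e n a b - Q e n a' b'‖ ≤ (‖e 0‖ + ‖e 1‖ + ‖e 2‖) / n := by
  have hnR : (0 : ℝ) < n := Nat.cast_pos.mpr hn
  have hdiff : Q e n a b - Q e n a' b'
      = (((a : ℝ) - a')/n) • e 0 + (((b : ℝ) - b')/n) • e 1
        + ((((a' : ℝ) + b') - ((a : ℝ) + b))/n) • e 2 := by
    simp only [Q, wf, Fin.sum_univ_three, Matrix.cons_val_zero, Matrix.cons_val_one,
      Matrix.head_cons, Matrix.cons_val_two, Matrix.tail_cons]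
    module
  have hc0 : |((a : ℝ) - a')/n| ≤ 1/n := by
    rw [abs_div, abs_of_pos hnR]
    apply div_le_div_of_nonneg_right ?_ hnR.le |>.trans_eq rfl
    rw [abs_le]
    constructor <;> [skip; skip] <;>
      · have c1 : (a : ℝ) ≤ (a' : ℝ) + 1 := by exact_mod_cast h1
        have c2 : (a' : ℝ) ≤ (a : ℝ) + 1 := by exact_mod_cast h2
        linarith
  have hc1 : |((b : ℝ) - b')/n| ≤ 1/n := by
    rw [abs_div, abs_of_pos hnR]
    apply div_le_div_of_nonneg_right ?_ hnR.le |>.trans_eq rfl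
    rw [abs_le]
    constructor <;>
      · have c1 : (b : ℝ) ≤ (b' : ℝ) + 1 := by exact_mod_cast h3
        have c2 : (b' : ℝ) ≤ (b : ℝ) + 1 := by exact_mod_cast h4
        linarith
  have hc2 : |(((a' : ℝ) + b') - ((a : ℝ) + b))/n| ≤ 1/n := by
    rw [abs_div, abs_of_pos hnR]
    apply div_le_div_of_nonneg_right ?_ hnR.le |>.trans_eq rfl
    rw [abs_le]
    constructor <;>
      · have c1 : (a : ℝ) + b ≤ (a' : ℝ) + b' + 1 := by exact_mod_cast h5
        have c2 : (a' : ℝ) + b' ≤ (a : ℝ) + b + 1 := by exact_mod_cast h6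
        linarith
  rw [hdiff]
  calc ‖(((a : ℝ) - a')/n) • e 0 + (((b : ℝ) - b')/n) • e 1
        + ((((a' : ℝ) + b') - ((a : ℝ) + b))/n) • e 2‖
      ≤ ‖(((a : ℝ) - a')/n) • e 0‖ + ‖(((b : ℝ) - b')/n) • e 1‖
        + ‖((((a' : ℝ) + b') - ((a : ℝ) + b))/n) • e 2‖ := by
        exact (norm_add_le _ _).trans (by gcongr; exact norm_add_le _ _)
    _ ≤ (1/n) * ‖e 0‖ + (1/n) * ‖e 1‖ + (1/n) * ‖e 2‖ := by
        rw [norm_smul, norm_smul, norm_smul]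
        gcongr <;> simp only [Real.norm_eq_abs] <;> assumption
    _ = (‖e 0‖ + ‖e 1‖ + ‖e 2‖) / n := by ring

end Geometry

end SpernerAux

open SpernerAux Filter Topology

/-- planar Knaster–Kuratowski–Mazurkiewicz lemma.  Let
`S = conv {e 0, e 1, e 2} ⊆ ℝ²` and let `F 0, F 1, F 2` be closed subsets of `S` such that for
every `A ⊆ {0, 1, 2}` we have `conv {e i : i ∈ A} ⊆ ⋃ i ∈ A, F i`.  Then `F 0 ∩ F 1 ∩ F 2` is
compact and non-empty. -/
theorem planar_KKM
    (e : Fin 3 → Pt) (S : Set Pt) (hS : S = convexHull ℝ (Set.range e))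
    (F : Fin 3 → Set Pt)
    (hclosed : ∀ i, IsClosed (F i)) (hsub : ∀ i, F i ⊆ S)
    (hcover : ∀ A : Set (Fin 3), convexHull ℝ (e '' A) ⊆ ⋃ i ∈ A, F i) :
    IsCompact (F 0 ∩ F 1 ∩ F 2) ∧ (F 0 ∩ F 1 ∩ F 2).Nonempty := by
  classical
  have hScomp : IsCompact S := by
    rw [hS]
    exact (Set.finite_range e).isCompact_convexHull (𝕜 := ℝ)
  have hFclosed : IsClosed (F 0 ∩ F 1 ∩ F 2) :=
    ((hclosed 0).inter (hclosed 1)).inter (hclosed 2)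
  refine ⟨hScomp.of_isClosed_subset hFclosed (fun x hx => hsub 0 hx.1.1), ?_⟩
  set L : ℝ := ‖e 0‖ + ‖e 1‖ + ‖e 2‖ with hL
  have hL0 : 0 ≤ L := by positivity
  -- key step: for every `n > 0` there are three points of `F 0, F 1, F 2` within `L / n`
  have key : ∀ n : ℕ, 0 < n → ∃ P : Fin 3 → Pt,
      (∀ i, P i ∈ F i) ∧ ∀ i j, ‖P i - P j‖ ≤ L / n := by
    intro n hn
    have H : ∀ x y : ℕ, ∃ i : Fin 3, x + y ≤ n →
        (Q e n x y ∈ F i ∧ (i = 0 → 0 < x) ∧ (i = 1 → 0 < y) ∧ (i = 2 → x + y < n)) := by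
      intro x y
      by_cases h : x + y ≤ n
      · set w := wf n x y with hw
        set A : Set (Fin 3) := {i | w i ≠ 0} with hA
        have hq : Q e n x y ∈ convexHull ℝ (e '' A) := by
          have hsum : ∑ i ∈ Finset.univ.filter (fun i => w i ≠ 0), w i = 1 := by
            rw [Finset.sum_filter_ne_zero]
            exact wf_sum hn
          have hmem : (Finset.univ.filter (fun i => w i ≠ 0)).centerMass w e
              ∈ convexHull ℝ (e '' A) :=
            Finset.centerMass_mem_convexHull _
              (fun i _ => wf_nonneg h i) (by rw [hsum]; norm_num)
              (fun i hi => ⟨i, (Finset.mem_filter.mp hi).2, rfl⟩)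
          rwa [Finset.centerMass_eq_of_sum_1 _ _ hsum,
            Finset.sum_filter_of_ne (fun i _ hne => by
              intro h0; rw [h0, zero_smul] at hne; exact hne rfl)] at hmem
        obtain ⟨i, hiA, hiF⟩ := Set.mem_iUnion₂.mp (hcover A hq)
        have hnR : (0 : ℝ) < n := Nat.cast_pos.mpr hn
        refine ⟨i, fun _ => ⟨hiF, ?_, ?_, ?_⟩⟩
        · rintro rfl
          have : w 0 ≠ 0 := hiA
          simp only [hw, wf, Matrix.cons_val_zero, div_ne_zero_iff] at this
          have : (x : ℝ) ≠ 0 := this.1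
          have : x ≠ 0 := by exact_mod_cast this
          omega
        · rintro rfl
          have : w 1 ≠ 0 := hiA
          simp only [hw, wf, Matrix.cons_val_one, Matrix.head_cons, Matrix.cons_val_zero, div_ne_zero_iff] at this
          have : (y : ℝ) ≠ 0 := this.1
          have : y ≠ 0 := by exact_mod_cast this
          omega
        · rintro rfl
          have hne : w 2 ≠ 0 := hiA
          simp only [hw, wf, Matrix.cons_val_two, Matrix.tail_cons, Matrix.head_cons,
            div_ne_zero_iff] at hne
          by_contra hcon
          have hxy' : x + y = n := by omega
          apply hne.1
          rw [← hxy']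
          push_cast
          ring
      · exact ⟨0, fun hc => absurd hc h⟩
    choose χ hχ using H
    obtain ⟨p, hp1, hp2⟩ := sperner n χ
      (fun x y hxy h => ((hχ x y) hxy).2.1 h)
      (fun x y hxy h => ((hχ x y) hxy).2.2.1 h)
      (fun x y hxy h => ((hχ x y) hxy).2.2.2 h) hn
    refine ⟨fun i => Q e n (p i).1 (p i).2, fun i => ?_, fun i j => ?_⟩
    · have := (hχ (p i).1 (p i).2 (hp1 i).1).1
      rwa [(hp1 i).2] at this
    · obtain ⟨a1, a2, a3⟩ := hp2 i j
      obtain ⟨b1, b2, b3⟩ := hp2 j i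
      exact Q_dist e hn a1 b1 a2 b2 a3 b3
  choose P hP1 hP2 using fun n => key (n+1) n.succ_pos
  have hmem : ∀ n, P n 0 ∈ S := fun n => hsub 0 (hP1 n 0)
  obtain ⟨z, hzS, φ, hφ, hlim⟩ := hScomp.tendsto_subseq hmem
  have hdistlim : Tendsto (fun k => L / (φ k + 1 : ℝ)) atTop (𝓝 0) := by
    have h1 : Tendsto (fun k : ℕ => L / (k + 1 : ℝ)) atTop (𝓝 0) := by
      have h2 := (tendsto_const_div_atTop_nhds_zero_nat L).comp (tendsto_add_atTop_nat 1)
      apply h2.congr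
      intro k
      show L / ((k + 1 : ℕ) : ℝ) = L / ((k : ℝ) + 1)
      push_cast
      ring
    apply squeeze_zero (fun k => by positivity) (fun k => ?_) h1
    apply div_le_div_of_nonneg_left hL0 (by positivity)
    have h3 : (k : ℝ) ≤ φ k := Nat.cast_le.mpr hφ.le_apply
    linarith
  have hz : ∀ i, z ∈ F i := by
    intro i
    have htend : Tendsto (fun k => P (φ k) i) atTop (𝓝 z) := by
      rw [tendsto_iff_dist_tendsto_zero]
      apply squeeze_zero (fun k => dist_nonneg) (fun k => ?_)
        (by simpa using hdistlim.add ((tendsto_iff_dist_tendsto_zero).mp hlim))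
      calc dist (P (φ k) i) z ≤ dist (P (φ k) i) (P (φ k) 0) + dist (P (φ k) 0) z :=
            dist_triangle _ _ _
        _ ≤ L / (φ k + 1 : ℝ) + dist (((fun n => P n 0) ∘ φ) k) z := by
            refine add_le_add ?_ (le_of_eq rfl)
            rw [dist_eq_norm]
            exact_mod_cast hP2 (φ k) i 0
    exact (hclosed i).mem_of_tendsto htend (Eventually.of_forall (fun k => hP1 (φ k) i))
  exact ⟨z, ⟨hz 0, hz 1⟩, hz 2⟩
end
end
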